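/- arXiv:2303.00245 — 4 statements merged into one kernel-verified Lean document; each statement's English description precedes it below -/
import Mathlib

section
/- Let R be a PID and U, W submodules of R^n. If W is a direct summand of R^n, then W ∩ U is a direct summand of U. If moreover U is also a direct summand of R^n, then W ∩ U is a direct summand of R^n. -/
/-!
If `R^n = W ⊕ D`, then `W ⊓ U` is the kernel of the projection `U → D` along `W`. Its image is
a submodule of a finite free module over a PID, hence free, so the surjection onto the image
splits and `W ⊓ U` has a complement `C` inside `U`. If also `R^n = U ⊕ E`, modularity of the
submodule lattice makes `C ⊔ E` a complement of `W ⊓ U` in `R^n`.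
-/

open LinearMap Submodule

theorem LinearMap.exists_isCompl_ker_of_surjective {R M P : Type*} [Ring R]
    [AddCommGroup M] [AddCommGroup P] [Module R M] [Module R P] [Module.Projective R P]
    (g : M →ₗ[R] P) (hg : range g = ⊤) : ∃ C : Submodule R M, IsCompl (ker g) C := by
  obtain ⟨s, hs⟩ := g.exists_rightInverse_of_surjective hg
  refine ⟨range s, IsCompl.symm ?_⟩
  rw [← ker_comp_of_ker_eq_bot g (ker_eq_bot_of_inverse hs)]
  let π : M →ₗ[R] range s :=
    (s ∘ₗ g).codRestrict (range s) fun x ↦ mem_range_self s (g x)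
  have hπ : ∀ x : range s, π x = x := by
    rintro ⟨_, y, rfl⟩
    ext
    simp [π, ← comp_apply g s, hs]
  simpa [π, ker_codRestrict] using isCompl_of_proj hπ

theorem Submodule.exists_le_disjoint_inf_sup_eq_of_isCompl {R M : Type*} [CommRing R]
    [IsDomain R] [IsPrincipalIdealRing R] [AddCommGroup M] [Module R M] [Module.Free R M]
    [Module.Finite R M] {W D : Submodule R M} (hWD : IsCompl W D) (U : Submodule R M) :
    ∃ C ≤ U, Disjoint (W ⊓ U) C ∧ W ⊓ U ⊔ C = U := by
  let f : U →ₗ[R] D := D.projectionOnto W hWD.symm ∘ₗ U.subtype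
  have hker : ker f.rangeRestrict = W.comap U.subtype := by
    rw [ker_rangeRestrict, ker_comp, ker_projectionOnto]
  obtain ⟨C, hC⟩ := f.rangeRestrict.exists_isCompl_ker_of_surjective f.range_rangeRestrict
  rw [hker, U.mapIic.isCompl_iff, Set.Iic.isCompl_iff] at hC
  refine ⟨C.map U.subtype, map_subtype_le U C, ?_⟩
  simpa [map_comap_subtype, inf_comm U] using hC

/-- Let `R` be a PID and `U, W ⊆ R^n`. If `W` is a direct summand of `R^n`, then
`W ⊓ U` is a direct summand of `U`; if moreover `U` is a direct summand of `R^n`,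
then `W ⊓ U` is a direct summand of `R^n`. -/
theorem stmt2 (R : Type) [CommRing R] [IsDomain R] [IsPrincipalIdealRing R]
    (n : ℕ) (U W : Submodule R (Fin n → R))
    (hW : ∃ C : Submodule R (Fin n → R), IsCompl W C) :
    (∃ C : Submodule R (Fin n → R), C ≤ U ∧ (W ⊓ U) ⊓ C = ⊥ ∧ (W ⊓ U) ⊔ C = U) ∧
    ((∃ C : Submodule R (Fin n → R), IsCompl U C) →
      ∃ C : Submodule R (Fin n → R), IsCompl (W ⊓ U) C) := by
  obtain ⟨D, hWD⟩ := hW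
  obtain ⟨C, hCU, hdisj, hsup⟩ := exists_le_disjoint_inf_sup_eq_of_isCompl hWD U
  refine ⟨⟨C, hCU, disjoint_iff.1 hdisj, hsup⟩, fun ⟨E, hUE⟩ ↦ ⟨C ⊔ E, ?_⟩⟩
  exact hdisj.isCompl_sup_right_of_isCompl_sup_left (by rwa [hsup])
end

section
/- Let R be a PID and let σ = {U_0, ..., U_p} be a collection of submodules of R^n with the common basis property. Then the closure of σ under finitely iterated sums and intersections also has the common basis property; in particular every submodule obtained from the U_i by iterated sums and intersections is a direct summand of R^n. -/
/-- A collection of submodules of `R^n` has the common basis property if there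
is a basis `b` of `R^n` such that each member is the span of a subset of `b`. -/
def HasCommonBasis (R : Type) [CommRing R] (n : ℕ)
    (σ : Set (Submodule R (Fin n → R))) : Prop :=
  ∃ b : Module.Basis (Fin n) R (Fin n → R),
    ∀ U ∈ σ, ∃ s : Set (Fin n), U = Submodule.span R (b '' s)

/-- The closure of a collection of submodules under (iterated) pairwise sums
and intersections. -/
inductive SumInterClosure (R : Type) [CommRing R] (n : ℕ)
    (σ : Set (Submodule R (Fin n → R))) : Submodule R (Fin n → R) → Prop
  | base {U} : U ∈ σ → SumInterClosure R n σ U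
  | sup {U V} : SumInterClosure R n σ U → SumInterClosure R n σ V →
      SumInterClosure R n σ (U ⊔ V)
  | inf {U V} : SumInterClosure R n σ U → SumInterClosure R n σ V →
      SumInterClosure R n σ (U ⊓ V)

/-! Spans of subsets of a fixed basis turn `⊔` and `⊓` into `∪` and `∩` of index sets, so the
closure never leaves them, and each such span is complemented by the span of the remaining
basis vectors. -/

namespace Module.Basis

variable {R M ι : Type*} [Semiring R] [AddCommMonoid M] [Module R M]
  (b : Basis ι R M) (s t : Set ι)

theorem span_image_inf_span_image :
    Submodule.span R (b '' s) ⊓ Submodule.span R (b '' t) = Submodule.span R (b '' (s ∩ t)) := by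
  ext x
  simp only [Submodule.mem_inf, b.mem_span_image, Set.subset_inter_iff]

theorem span_image_sup_span_image :
    Submodule.span R (b '' s) ⊔ Submodule.span R (b '' t) = Submodule.span R (b '' (s ∪ t)) := by
  rw [Set.image_union, Submodule.span_union]

theorem isCompl_span_image_compl :
    IsCompl (Submodule.span R (b '' s)) (Submodule.span R (b '' sᶜ)) := by
  constructor
  · rw [disjoint_iff, span_image_inf_span_image, Set.inter_compl_self, Set.image_empty,
      Submodule.span_empty]
  · rw [codisjoint_iff, span_image_sup_span_image, Set.union_compl_self, Set.image_univ,
      b.span_eq]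

end Module.Basis

theorem SumInterClosure.exists_eq_span_image {R : Type} [CommRing R] {n : ℕ}
    {σ : Set (Submodule R (Fin n → R))} (b : Module.Basis (Fin n) R (Fin n → R))
    (hb : ∀ U ∈ σ, ∃ s : Set (Fin n), U = Submodule.span R (b '' s))
    {U : Submodule R (Fin n → R)} (hU : SumInterClosure R n σ U) :
    ∃ s : Set (Fin n), U = Submodule.span R (b '' s) := by
  induction hU with
  | base h => exact hb _ h
  | sup _ _ ihU ihV =>
    obtain ⟨s, rfl⟩ := ihU
    obtain ⟨t, rfl⟩ := ihV
    exact ⟨s ∪ t, b.span_image_sup_span_image s t⟩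
  | inf _ _ ihU ihV =>
    obtain ⟨s, rfl⟩ := ihU
    obtain ⟨t, rfl⟩ := ihV
    exact ⟨s ∩ t, b.span_image_inf_span_image s t⟩

theorem stmt7_general (R : Type) [CommRing R]
    (n : ℕ) (σ : Set (Submodule R (Fin n → R)))
    (hcb : HasCommonBasis R n σ) :
    HasCommonBasis R n {U | SumInterClosure R n σ U} ∧
    ∀ U, SumInterClosure R n σ U → ∃ C : Submodule R (Fin n → R), IsCompl U C := by
  obtain ⟨b, hb⟩ := hcb
  refine ⟨⟨b, fun U hU => hU.exists_eq_span_image b hb⟩, fun U hU => ?_⟩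
  obtain ⟨s, rfl⟩ := hU.exists_eq_span_image b hb
  exact ⟨_, b.isCompl_span_image_compl s⟩

/-- If a finite collection `σ` of submodules of `R^n` over a PID has the common
basis property, then so does its closure under iterated sums and intersections;
in particular every module obtained from members of `σ` by iterated sums and
intersections is a direct summand of `R^n`. -/
theorem stmt7 (R : Type) [CommRing R] [IsDomain R] [IsPrincipalIdealRing R]
    (n : ℕ) (σ : Set (Submodule R (Fin n → R))) (hfin : σ.Finite)
    (hcb : HasCommonBasis R n σ) :
    HasCommonBasis R n {U | SumInterClosure R n σ U} ∧
    ∀ U, SumInterClosure R n σ U → ∃ C : Submodule R (Fin n → R), IsCompl U C :=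
  stmt7_general R n σ hcb
end

section
/- Let F be a field and let U_1, ..., U_k be subspaces of F^n. Write U_S = ∩_{i∈S} U_i with U_∅ = F^n. Then {U_1,...,U_k} has the common basis property if and only if for every S ⊆ [k], dim(Σ_{i∉S} (U_S ∩ U_i)) = Σ_{T ⊋ S} (-1)^{|S|-|T|+1} dim(U_T). -/
open Module Submodule Finset

/-! If every `U i` is spanned by a subset `t i` of a basis, every subspace in the formula is spanned
by the corresponding Boolean combination of the `t i`, and the formula becomes inclusion–exclusion
for the union of the sets `t_S ∩ t_i`, `i ∉ S`.

Conversely, put `D_S = ∑_{i ∉ S} U_{S ∪ {i}} ≤ U_S` and choose a complement `C_S` of `D_S`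
in `U_S`. Downward induction on `S` gives `U_S = ∑_{T ⊇ S} C_T`. The formula says
`dim C_S = ∑_{T ⊇ S} (-1)^{|T|-|S|} dim U_T`, so Möbius inversion on the Boolean lattice gives
`∑_S dim C_S = dim U_∅ = n`. Hence the union of bases of the `C_S` is a basis of `F^n`, and
`U_i = ∑_{T ∋ i} C_T` is spanned by part of it. -/

section Combinatorics

variable {ι R : Type*} [Fintype ι] [DecidableEq ι] [CommRing R]

def ssupersetAltSum (f : Finset ι → R) (S : Finset ι) : R :=
  ∑ T ∈ univ.powerset.filter (fun T => S ⊂ T), (-1) ^ (#T - #S + 1) * f T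

lemma sub_ssupersetAltSum (f : Finset ι → R) (S : Finset ι) :
    f S - ssupersetAltSum f S = ∑ T ∈ univ.filter (S ⊆ ·), (-1) ^ (#T - #S) * f T := by
  have hsplit : univ.filter (S ⊆ ·) = insert S (univ.powerset.filter (fun T => S ⊂ T)) := by
    ext T
    simp only [mem_filter, mem_univ, true_and, mem_insert, mem_powerset, subset_univ]
    exact ⟨fun h => h.ssubset_or_eq.symm.imp_left Eq.symm,
      by rintro (rfl | h) <;> [rfl; exact h.subset]⟩
  rw [hsplit, sum_insert (by simp), ssupersetAltSum, Nat.sub_self, pow_zero, one_mul,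
    sub_eq_add_neg, ← sum_neg_distrib]
  simp only [pow_succ, mul_neg_one, neg_mul, neg_neg]

-- Möbius inversion on the Boolean lattice: the inner sums are `(1 - 1) ^ #T`.
lemma sum_sub_ssupersetAltSum (f : Finset ι → R) :
    ∑ S, (f S - ssupersetAltSum f S) = f ∅ := by
  simp_rw [sub_ssupersetAltSum]
  rw [sum_comm' (t' := univ) (s' := fun T => T.powerset) (by simp)]
  have hinner (T : Finset ι) :
      ∑ S ∈ T.powerset, (-1 : R) ^ (#T - #S) * f T = 0 ^ #T * f T := by
    rw [← sum_mul, ← neg_add_cancel (1 : R), add_comm, ← sum_pow_mul_eq_add_pow]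
    simp
  simp_rw [hinner]
  rw [sum_eq_single ∅ (fun T _ hT => by simp [card_ne_zero.2 (nonempty_iff_ne_empty.2 hT)])
    (by simp)]
  simp

lemma sum_ssuperset_eq_sum_nonempty_subset_compl {M : Type*} [AddCommMonoid M]
    (S : Finset ι) (g : Finset ι → M) :
    ∑ T ∈ univ.powerset.filter (fun T => S ⊂ T), g T =
      ∑ q ∈ Sᶜ.powerset.filter (·.Nonempty), g (S ∪ q) := by
  refine (sum_nbij' (fun q => S ∪ q) (fun T => T \ S) ?_ ?_ ?_ ?_ (fun _ _ => rfl)).symm <;>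
    simp only [mem_filter, mem_powerset, subset_univ, true_and, subset_compl_iff_disjoint_left]
  · rintro q ⟨hSq, x, hx⟩
    exact (ssubset_iff_of_subset subset_union_left).2
      ⟨x, mem_union_right _ hx, disjoint_right.1 hSq hx⟩
  · exact fun T hT => ⟨disjoint_sdiff, sdiff_nonempty.2 (not_subset_of_ssubset hT)⟩
  · exact fun q hq => union_sdiff_cancel_left hq.1
  · exact fun T hT => union_sdiff_of_subset hT.subset

lemma card_biUnion_inf_inter {α : Type*} [Fintype α] [DecidableEq α]
    (t : ι → Finset α) (S : Finset ι) :
    (#(Sᶜ.biUnion fun i => S.inf t ∩ t i) : R) =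
      ssupersetAltSum (fun T => (#(T.inf t) : R)) S := by
  have hIE := congrArg (Int.cast : ℤ → R)
    (inclusion_exclusion_card_biUnion Sᶜ (fun i => S.inf t ∩ t i))
  push_cast at hIE
  rw [hIE, ssupersetAltSum, sum_ssuperset_eq_sum_nonempty_subset_compl,
    ← sum_coe_sort (Sᶜ.powerset.filter (·.Nonempty))]
  refine sum_congr rfl fun ⟨q, hq⟩ _ => ?_
  obtain ⟨hSq, hq⟩ := mem_filter.1 hq
  have hSq : Disjoint S q := subset_compl_iff_disjoint_left.1 (mem_powerset.1 hSq)
  have hcard : #(S ∪ q) - #S = #q := by rw [card_union_of_disjoint hSq]; omega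
  have hinf : (S ∪ q).inf t = q.inf' hq (fun i => S.inf t ∩ t i) := by
    rw [inf'_eq_inf, inf_union, show (fun i => S.inf t ∩ t i) = (fun _ => S.inf t) ⊓ t from rfl,
      inf_inf, inf_const hq]
  rw [hcard, hinf]

end Combinatorics

theorem iInf_eq_iSup_superset {α ι : Type*} [CompleteLattice α] [Fintype ι] [DecidableEq ι]
    (U : ι → α) (C : Finset ι → α)
    (hC : ∀ S, (⨆ i ∈ Sᶜ, (⨅ j ∈ S, U j) ⊓ U i) ⊔ C S = ⨅ j ∈ S, U j)
    (S : Finset ι) :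
    ⨅ j ∈ S, U j = ⨆ T, ⨆ (_ : S ⊆ T), C T := by
  induction S using WellFoundedGT.induction with
  | _ S ih =>
  have hins {i} (hi : i ∉ S) :
      (⨅ j ∈ S, U j) ⊓ U i = ⨆ T, ⨆ (_ : insert i S ⊆ T), C T := by
    rw [inf_comm, ← Finset.iInf_insert, ih _ (ssubset_insert hi)]
  rw [← hC S]
  apply le_antisymm
  · refine sup_le (iSup₂_le fun i hi => ?_) (le_iSup₂_of_le S subset_rfl le_rfl)
    rw [hins (by simpa using hi)]
    exact iSup₂_le fun T hT => le_iSup₂_of_le T ((subset_insert _ _).trans hT) le_rfl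
  · refine iSup₂_le fun T hST => ?_
    obtain rfl | hST := hST.eq_or_ssubset
    · exact le_sup_right
    obtain ⟨i, hiT, hiS⟩ := exists_of_ssubset hST
    refine le_sup_of_le_left (le_iSup₂_of_le i (by simpa using hiS) ?_)
    rw [hins hiS]
    exact le_iSup₂_of_le T (insert_subset hiT hST.subset) le_rfl

lemma LinearIndependent.span_image_inter {R M κ : Type*} [Ring R] [AddCommGroup M] [Module R M]
    {v : κ → M} (hv : LinearIndependent R v) (s t : Set κ) :
    span R (v '' (s ∩ t)) = span R (v '' s) ⊓ span R (v '' t) := by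
  refine le_antisymm (le_inf (span_mono (Set.image_mono Set.inter_subset_left))
    (span_mono (Set.image_mono Set.inter_subset_right))) ?_
  conv_lhs => rw [← Set.inter_union_sdiff s t, Set.image_union, span_union]
  rw [sup_inf_assoc_of_le _ (span_mono (Set.image_mono Set.inter_subset_right)),
    (hv.disjoint_span_image Set.disjoint_sdiff_left).eq_bot, sup_bot_eq]

lemma LinearIndependent.finrank_span_image_finset {R M κ : Type*} [DivisionRing R] [AddCommGroup M]
    [Module R M] {v : κ → M} (hv : LinearIndependent R v) (s : Finset κ) :
    finrank R (span R (v '' s)) = #s := by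
  rw [Set.image_eq_range]
  exact (finrank_span_eq_card (hv.comp _ Subtype.val_injective)).trans (Fintype.card_coe s)

variable {F V ι κ : Type*} [DivisionRing F] [AddCommGroup V] [Module F V]

lemma Module.Basis.iInf_span_image [Fintype κ] [DecidableEq κ] (b : Basis κ F V)
    (t : ι → Finset κ) (S : Finset ι) :
    ⨅ j ∈ S, span F (b '' t j) = span F (b '' ↑(S.inf t)) := by
  classical
  induction S using Finset.induction_on with
  | empty => simp [b.span_eq]
  | insert i S _ ih => rw [Finset.iInf_insert, ih, inf_insert, inf_eq_inter, coe_inter,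
    b.linearIndependent.span_image_inter]

theorem finrank_iSup_inf_eq_ssupersetAltSum {R : Type*} [CommRing R] [Fintype ι] [DecidableEq ι]
    [Fintype κ] [DecidableEq κ] {U : ι → Submodule F V} (b : Basis κ F V)
    (t : ι → Finset κ)
    (hU : ∀ i, U i = span F (b '' t i)) (S : Finset ι) :
    (finrank F ↥(⨆ i ∈ Sᶜ, ((⨅ j ∈ S, U j) ⊓ U i)) : R) =
      ssupersetAltSum (fun T => (finrank F ↥(⨅ j ∈ T, U j) : R)) S := by
  obtain rfl : U = _ := funext hU
  have hD : ⨆ i ∈ Sᶜ, ((⨅ j ∈ S, span F (b '' t j)) ⊓ span F (b '' t i)) =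
      span F (b '' ↑(Sᶜ.biUnion fun i => S.inf t ∩ t i)) := by
    simp only [coe_biUnion, Set.image_iUnion₂, span_iUnion₂, coe_inter,
      b.linearIndependent.span_image_inter, b.iInf_span_image, mem_coe]
  have hUT (T : Finset ι) : finrank F ↥(⨅ j ∈ T, span F (b '' t j)) = #(T.inf t) := by
    rw [b.iInf_span_image, b.linearIndependent.finrank_span_image_finset]
  rw [hD, b.linearIndependent.finrank_span_image_finset]
  simp only [hUT]
  exact card_biUnion_inf_inter t S

lemma span_range_coe_basis {W : Submodule F V} (b : Basis κ F W) :
    span F (Set.range fun j => (b j : V)) = W := by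
  rw [Set.range_comp', ← W.coe_subtype, span_image, b.span_eq, map_subtype_top]

theorem exists_basis_span_image_eq_iSup [FiniteDimensional F V] [Fintype ι] [Fintype κ]
    (C : ι → Submodule F V)
    (htop : ⨆ i, C i = ⊤) (hsum : ∑ i, finrank F (C i) = finrank F V)
    (hκ : Fintype.card κ = finrank F V) :
    ∃ b : Basis κ F V,
      ∀ P : ι → Prop, ∃ s : Set κ, span F (b '' s) = ⨆ i, ⨆ (_ : P i), C i := by
  let v : (Σ i, Fin (finrank F (C i))) → V := fun p => finBasis F (C p.1) p.2
  have hv (P : ι → Prop) : span F (v '' {p | P p.1}) = ⨆ i, ⨆ (_ : P i), C i := by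
    have : v '' {p | P p.1} = ⋃ i, ⋃ (_ : P i), Set.range fun j => v ⟨i, j⟩ := by
      ext; simp [v]
    rw [this, span_iUnion₂]
    exact iSup_congr fun i => iSup_congr fun _ => span_range_coe_basis (finBasis F (C i))
  let e : κ ≃ Σ i, Fin (finrank F (C i)) := Fintype.equivOfCardEq (by simp [hsum, hκ])
  have hspan : ⊤ ≤ span F (Set.range (v ∘ e)) := by
    simpa [e.surjective.range_comp, htop] using (hv fun _ => True).ge
  refine ⟨basisOfTopLeSpanOfCardEqFinrank (v ∘ e) hspan hκ,
    fun P => ⟨e ⁻¹' {p | P p.1}, ?_⟩⟩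
  rw [coe_basisOfTopLeSpanOfCardEqFinrank, Set.image_comp, e.image_preimage, hv]

theorem exists_basis_span_image_of_finrank_iSup_inf_eq {R : Type*} [CommRing R] [CharZero R]
    [FiniteDimensional F V] [Fintype ι] [DecidableEq ι] [Fintype κ]
    (hκ : Fintype.card κ = finrank F V) {U : ι → Submodule F V}
    (h : ∀ S : Finset ι, (finrank F ↥(⨆ i ∈ Sᶜ, ((⨅ j ∈ S, U j) ⊓ U i)) : R) =
      ssupersetAltSum (fun T => (finrank F ↥(⨅ j ∈ T, U j) : R)) S) :
    ∃ b : Basis κ F V, ∀ i, ∃ s : Set κ, U i = span F (b '' s) := by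
  have hle (S : Finset ι) : ⨆ i ∈ Sᶜ, ((⨅ j ∈ S, U j) ⊓ U i) ≤ ⨅ j ∈ S, U j :=
    iSup₂_le fun _ _ => inf_le_left
  choose C hdisj hsup using fun S => IsModularLattice.exists_disjoint_and_sup_eq (hle S)
  have hU := iInf_eq_iSup_superset U C hsup
  have hC (S : Finset ι) : (finrank F (C S) : R) =
      finrank F ↥(⨅ j ∈ S, U j) - finrank F ↥(⨆ i ∈ Sᶜ, ((⨅ j ∈ S, U j) ⊓ U i)) := by
    have := finrank_sup_add_finrank_inf_eq (⨆ i ∈ Sᶜ, ((⨅ j ∈ S, U j) ⊓ U i)) (C S)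
    rw [hsup, (hdisj S).eq_bot, finrank_bot, add_zero] at this
    rw [this, Nat.cast_add]
    ring
  have hsum : ∑ S, finrank F (C S) = finrank F V := by
    have := sum_sub_ssupersetAltSum (fun T => (finrank F ↥(⨅ j ∈ T, U j) : R))
    simp only [← h, ← hC] at this
    rw [show ⨅ j ∈ (∅ : Finset ι), U j = ⊤ by simp, finrank_top] at this
    exact_mod_cast this
  obtain ⟨b, hb⟩ := exists_basis_span_image_eq_iSup C (by simpa using (hU ∅).symm) hsum hκ
  refine ⟨b, fun i => ?_⟩
  obtain ⟨s, hs⟩ := hb (i ∈ ·)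
  exact ⟨s, by simpa [hs] using hU {i}⟩

/-- For subspaces `U_1, ..., U_k` of `F^n` over a field `F` (with
`U_S = ⋂_{i ∈ S} U_i`, `U_∅ = F^n`), the collection has the common basis
property if and only if for every `S ⊆ [k]` the inclusion-exclusion formula
`dim (∑_{i ∉ S} (U_S ∩ U_i)) = ∑_{T ⊋ S} (-1)^{|S|-|T|+1} dim U_T` holds. -/
theorem stmt12 (F : Type) [Field F] (n k : ℕ)
    (U : Fin k → Submodule F (Fin n → F)) :
    (∃ b : Basis (Fin n) F (Fin n → F),
      ∀ i : Fin k, ∃ s : Set (Fin n), U i = Submodule.span F (b '' s)) ↔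
    (∀ S : Finset (Fin k),
      (finrank F ↥(⨆ i ∈ Sᶜ, ((⨅ j ∈ S, U j) ⊓ U i)) : ℝ) =
        ∑ T ∈ Finset.univ.powerset.filter (fun T => S ⊂ T),
          (-1 : ℝ) ^ (T.card - S.card + 1) * finrank F ↥(⨅ j ∈ T, U j)) := by
  constructor
  · rintro ⟨b, hb⟩ S
    choose s hs using hb
    exact finrank_iSup_inf_eq_ssupersetAltSum b (fun i => (s i).toFinite.toFinset)
      (fun i => by rw [hs i, Set.Finite.coe_toFinset]) S
  · exact exists_basis_span_image_of_finrank_iSup_inf_eq (by simp)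
end

section
/- Let F be a field and let M be a finite-dimensional F-vector space. Given any two flags of subspaces of M (chains of subspaces under inclusion), there is a basis of M such that every subspace appearing in either flag is the span of a subset of that basis. Equivalently, the union of any two flags has the common basis property. -/
/-!
Extend both flags to `0 = V₀ ≤ ⋯ ≤ Vₙ = M` and `0 = W₀ ≤ ⋯ ≤ Wₘ = M`, and for each cell `(i, j)`
choose a complement `C i j` of `Vᵢ ⊓ Wⱼ₊₁ ⊔ Vᵢ₊₁ ⊓ Wⱼ` in `Vᵢ₊₁ ⊓ Wⱼ₊₁`. Summing over the grid,
`Vᵢ ⊓ Wⱼ = ⨆_{i' < i, j' < j} C i' j'`, and the dimension formula for `⊔` and `⊓` gives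
`dim (Vᵢ ⊓ Wⱼ) = ∑_{i' < i, j' < j} dim (C i' j')`. Hence the union of bases of all `C i j` spans
`M` with at most `dim M` vectors, so it is a basis, and `Vᵢ = Vᵢ ⊓ Wₘ`, `Wⱼ = Vₙ ⊓ Wⱼ` are spanned
by parts of it.
-/

open Finset Module Submodule

theorem exists_disjoint_sup_eq_of_le {α : Type*} [Lattice α] [BoundedOrder α] [IsModularLattice α]
    [ComplementedLattice α] {a b : α} (h : a ≤ b) : ∃ c, Disjoint a c ∧ a ⊔ c = b := by
  obtain ⟨k, hk⟩ := exists_isCompl a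
  refine ⟨k ⊓ b, hk.disjoint.mono_right inf_le_left, ?_⟩
  rw [← sup_inf_assoc_of_le _ h, hk.sup_eq_top, top_inf_eq]

theorem Monotone.exists_extend_nat_bot_top {α : Type*} [PartialOrder α] [BoundedOrder α] {a : ℕ}
    {V : Fin a → α} (hV : Monotone V) :
    ∃ V' : ℕ → α, Monotone V' ∧ V' 0 = ⊥ ∧ V' (a + 1) = ⊤ ∧ ∀ i : Fin a, V' (i + 1) = V i := by
  refine ⟨fun k => if _ : k = 0 then ⊥ else if h : k ≤ a then V ⟨k - 1, by omega⟩ else ⊤,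
    fun k l hkl => ?_, by simp, by simp, fun i => by simp⟩
  dsimp only
  split_ifs <;> first | exact bot_le | exact le_top | exact hV (Fin.mk_le_mk.2 (by omega)) | omega

theorem range_succ_product_range_succ (i j : ℕ) :
    range (i + 1) ×ˢ range (j + 1) =
      insert (i, j) (range i ×ˢ range (j + 1) ∪ range (i + 1) ×ˢ range j) := by
  ext ⟨k, l⟩; simp only [mem_product, mem_range, mem_insert, mem_union, Prod.mk.injEq]; omega

theorem range_product_inter_range_product (i j : ℕ) :
    range i ×ˢ range (j + 1) ∩ range (i + 1) ×ˢ range j = range i ×ˢ range j := by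
  ext ⟨k, l⟩; simp only [mem_product, mem_range, mem_inter]; omega

theorem eq_sup_range_product_of_succ_succ {α : Type*} [SemilatticeSup α] [OrderBot α]
    {f c : ℕ → ℕ → α} (hf₀ : ∀ j, f 0 j = ⊥) (hf₀' : ∀ i, f i 0 = ⊥)
    (hf : ∀ i j, f i (j + 1) ⊔ f (i + 1) j ⊔ c i j = f (i + 1) (j + 1)) (i j : ℕ) :
    f i j = (range i ×ˢ range j).sup fun p => c p.1 p.2 := by
  induction i generalizing j with
  | zero => simp [hf₀]
  | succ i ih =>
    induction j with
    | zero => simp [hf₀']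
    | succ j ihj =>
      rw [← hf, ih, ihj, range_succ_product_range_succ, sup_insert, sup_union]
      exact sup_comm _ _

theorem eq_sum_range_product_of_succ_succ {f c : ℕ → ℕ → ℕ} (hf₀ : ∀ j, f 0 j = 0)
    (hf₀' : ∀ i, f i 0 = 0)
    (hf : ∀ i j, f (i + 1) (j + 1) + f i j = f i (j + 1) + f (i + 1) j + c i j) (i j : ℕ) :
    f i j = ∑ p ∈ range i ×ˢ range j, c p.1 p.2 := by
  induction i generalizing j with
  | zero => simp [hf₀]
  | succ i ih =>
    induction j with
    | zero => simp [hf₀']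
    | succ j ihj =>
      have hunion := sum_union_inter (s₁ := range i ×ˢ range (j + 1))
        (s₂ := range (i + 1) ×ˢ range j) (f := fun p => c p.1 p.2)
      have hnotin : (i, j) ∉ range i ×ˢ range (j + 1) ∪ range (i + 1) ×ˢ range j := by simp
      rw [range_product_inter_range_product, ← ih, ← ih, ← ihj] at hunion
      rw [range_succ_product_range_succ, sum_insert hnotin]
      have := hf i j
      dsimp only at hunion ⊢
      omega

section

variable {F M : Type*} [Field F] [AddCommGroup M] [Module F M]

theorem Submodule.finrank_sup_sup_add_finrank_inf [FiniteDimensional F M] (A B C : Submodule F M)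
    (h : Disjoint (A ⊔ B) C) :
    finrank F ↥(A ⊔ B ⊔ C) + finrank F ↥(A ⊓ B) = finrank F A + finrank F B + finrank F C := by
  have hABC := finrank_sup_add_finrank_inf_eq (A ⊔ B) C
  have hAB := finrank_sup_add_finrank_inf_eq A B
  rw [h.eq_bot, finrank_bot] at hABC
  omega

theorem Submodule.exists_finset_span_eq_card_eq_finrank [FiniteDimensional F M]
    (N : Submodule F M) : ∃ u : Finset M, span F (u : Set M) = N ∧ u.card = finrank F N := by
  obtain ⟨t, -, hspan, hli⟩ := exists_linearIndependent F (N : Set M)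
  have ht : t.Finite := hli.setFinite
  refine ⟨ht.toFinset, by rw [Set.Finite.coe_toFinset, hspan, span_eq], ?_⟩
  rw [← finrank_span_finset_eq_card (by rwa [Set.Finite.coe_toFinset]), Set.Finite.coe_toFinset,
    hspan, span_eq]

theorem Submodule.span_coe_biUnion {ι : Type*} [DecidableEq M] (s : Finset ι) (u : ι → Finset M) :
    span F (s.biUnion u : Set M) = s.sup fun i => span F (u i : Set M) := by
  rw [coe_biUnion, span_iUnion₂, Finset.sup_eq_iSup]
  rfl

theorem exists_basis_range_eq_of_span_eq_top [FiniteDimensional F M] {U : Finset M}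
    (hspan : span F (U : Set M) = ⊤) (hcard : U.card ≤ finrank F M) :
    ∃ B : Basis (Fin (finrank F M)) F M, Set.range B = U := by
  have hcard' : Fintype.card U = finrank F M := by
    have := finrank_span_finset_le_card (R := F) U
    rw [Set.finrank, hspan, finrank_top] at this
    simp only [Fintype.card_coe]; omega
  let B₀ := basisOfTopLeSpanOfCardEqFinrank (fun x : U => (x : M))
    (by rw [Subtype.range_coe_subtype]; exact hspan.ge) hcard'
  refine ⟨B₀.reindex (Fintype.equivFinOfCardEq hcard'), ?_⟩
  rw [Basis.range_reindex, coe_basisOfTopLeSpanOfCardEqFinrank, Subtype.range_coe_subtype]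
  rfl

theorem exists_finset_adapted_to_two_flags [FiniteDimensional F M] {V W : ℕ → Submodule F M}
    (hV : Monotone V) (hW : Monotone W) (hV₀ : V 0 = ⊥) (hW₀ : W 0 = ⊥) {n m : ℕ}
    (hVn : V n = ⊤) (hWm : W m = ⊤) :
    ∃ U : Finset M, span F (U : Set M) = ⊤ ∧ U.card ≤ finrank F M ∧
      (∀ i ≤ n, ∃ S ⊆ U, span F (S : Set M) = V i) ∧
      (∀ j ≤ m, ∃ S ⊆ U, span F (S : Set M) = W j) := by
  classical
  have hcompl : ∀ i j, ∃ C, Disjoint (V i ⊓ W (j + 1) ⊔ V (i + 1) ⊓ W j) C ∧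
      V i ⊓ W (j + 1) ⊔ V (i + 1) ⊓ W j ⊔ C = V (i + 1) ⊓ W (j + 1) := fun i j =>
    exists_disjoint_sup_eq_of_le <| sup_le (inf_le_inf_right _ (hV i.le_succ))
      (inf_le_inf_left _ (hW j.le_succ))
  choose C hCdisj hCsup using hcompl
  have hgrid (i j : ℕ) : V i ⊓ W j = (range i ×ˢ range j).sup fun p => C p.1 p.2 :=
    eq_sup_range_product_of_succ_succ (f := fun i j => V i ⊓ W j) (by simp [hV₀]) (by simp [hW₀])
      hCsup i j
  have hrank (i j : ℕ) :
      finrank F ↥(V i ⊓ W j) = ∑ p ∈ range i ×ˢ range j, finrank F (C p.1 p.2) := by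
    refine eq_sum_range_product_of_succ_succ (f := fun i j => finrank F ↥(V i ⊓ W j))
      (c := fun i j => finrank F (C i j)) (by simp [hV₀]) (by simp [hW₀]) (fun i j => ?_) i j
    have hinf : V i ⊓ W (j + 1) ⊓ (V (i + 1) ⊓ W j) = V i ⊓ W j := by
      rw [inf_inf_inf_comm, inf_eq_left.2 (hV i.le_succ), inf_eq_right.2 (hW j.le_succ)]
    rw [← hCsup, ← hinf]
    exact finrank_sup_sup_add_finrank_inf _ _ _ (hCdisj i j)
  choose u hu_span hu_card using fun p : ℕ × ℕ => exists_finset_span_eq_card_eq_finrank (C p.1 p.2)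
  have hspan (s : Finset (ℕ × ℕ)) : span F (s.biUnion u : Set M) = s.sup fun p => C p.1 p.2 := by
    simp only [span_coe_biUnion, hu_span]
  refine ⟨(range n ×ˢ range m).biUnion u, ?_, ?_, fun i hi => ?_, fun j hj => ?_⟩
  · rw [hspan, ← hgrid, hVn, hWm, top_inf_eq]
  · calc _ ≤ ∑ p ∈ range n ×ˢ range m, (u p).card := card_biUnion_le
      _ = finrank F ↥(V n ⊓ W m) := by simp only [hu_card, hrank]
      _ = finrank F M := by rw [hVn, hWm, top_inf_eq, finrank_top]
  · refine ⟨(range i ×ˢ range m).biUnion u, biUnion_subset_biUnion_of_subset_left _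
      (product_subset_product (range_subset_range.2 hi) subset_rfl), ?_⟩
    rw [hspan, ← hgrid, hWm, inf_top_eq]
  · refine ⟨(range n ×ˢ range j).biUnion u, biUnion_subset_biUnion_of_subset_left _
      (product_subset_product subset_rfl (range_subset_range.2 hj)), ?_⟩
    rw [hspan, ← hgrid, hVn, top_inf_eq]

end

/-- Let `F` be a field and `M` a finite-dimensional `F`-vector space. Any two
flags of subspaces of `M` admit a common basis: there is a basis of `M` such
that every subspace appearing in either flag is the span of a subset of it. -/
theorem stmt17 (F : Type) [Field F] (M : Type) [AddCommGroup M] [Module F M]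
    [FiniteDimensional F M] (a b : ℕ)
    (V : Fin a → Submodule F M) (hV : Monotone V)
    (W : Fin b → Submodule F M) (hW : Monotone W) :
    ∃ B : Module.Basis (Fin (Module.finrank F M)) F M,
      (∀ i : Fin a, ∃ s : Set (Fin (Module.finrank F M)),
        V i = Submodule.span F (B '' s)) ∧
      (∀ j : Fin b, ∃ s : Set (Fin (Module.finrank F M)),
        W j = Submodule.span F (B '' s)) := by
  obtain ⟨V', hV'mono, hV'₀, hV'top, hV'V⟩ := hV.exists_extend_nat_bot_top
  obtain ⟨W', hW'mono, hW'₀, hW'top, hW'W⟩ := hW.exists_extend_nat_bot_top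
  obtain ⟨U, hUspan, hUcard, hUV, hUW⟩ :=
    exists_finset_adapted_to_two_flags hV'mono hW'mono hV'₀ hW'₀ hV'top hW'top
  obtain ⟨B, hB⟩ := exists_basis_range_eq_of_span_eq_top hUspan hUcard
  have hsub {S : Finset M} (hS : S ⊆ U) : B '' (B ⁻¹' S) = S :=
    Set.image_preimage_eq_of_subset (hB ▸ coe_subset.2 hS)
  refine ⟨B, fun i => ?_, fun j => ?_⟩
  · obtain ⟨S, hSU, hS⟩ := hUV (i + 1) (by omega)
    exact ⟨B ⁻¹' S, by rw [hsub hSU, hS, hV'V]⟩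
  · obtain ⟨S, hSU, hS⟩ := hUW (j + 1) (by omega)
    exact ⟨B ⁻¹' S, by rw [hsub hSU, hS, hW'W]⟩
end
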